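/- arXiv:0903.0157 — 3 statements merged into one kernel-verified Lean document; each statement's English description precedes it below -/
import Mathlib

section
/- Let X and Z be Banach spaces, 1 < p ≤ ∞, and Y = X ⊕_p Z, so that the dual norm satisfies ‖(x*,z*)‖ = (‖x*‖^q + ‖z*‖^q)^{1/q} where 1/p + 1/q = 1. Let π : B_{Y*} → B_{X*} be the restriction map. If (xₙ*) is a sequence in B_{X*} weak* converging to x₀* with ‖xₙ*‖ → ‖x₀*‖, then for every y₀* = (x₀*, z₀*) ∈ π⁻¹(x₀*) there exist yₙ* ∈ π⁻¹(xₙ*) with yₙ* → y₀* weak*. -/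
open Filter Topology NormedSpace

/-!
The fiber over `x*` is the set of `(x*, z*)` with `‖z*‖ ≤ ρ(‖x*‖)`, where
`ρ(s) = (1 - s^q)^(1/q)` is continuous. Since `‖xₙ*‖ → ‖x₀*‖`, the radii `ρ(‖xₙ*‖)` tend to
`ρ(‖x₀*‖) ≥ ‖z₀*‖`, so shrinking `z₀*` radially to norm at most `ρ(‖xₙ*‖)` gives lifts
`zₙ* → z₀*` in norm, hence weak*.
-/

theorem rpow_add_rpow_one_div_le_one_iff {q s t : ℝ} (hq : 0 < q) (hs₀ : 0 ≤ s) (hs₁ : s ≤ 1)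
    (ht : 0 ≤ t) : (s ^ q + t ^ q) ^ (1 / q) ≤ 1 ↔ t ≤ (1 - s ^ q) ^ (1 / q) := by
  have hsq : s ^ q ≤ 1 := Real.rpow_le_one hs₀ hs₁ hq.le
  rw [one_div, Real.rpow_inv_le_iff_of_pos (by positivity) zero_le_one hq, Real.one_rpow,
    Real.le_rpow_inv_iff_of_pos ht (by linarith) hq]
  constructor <;> intro h <;> linarith

theorem exists_norm_le_and_tendsto_of_tendsto {ι E : Type*} [NormedAddCommGroup E]
    [NormedSpace ℝ E] {l : Filter ι} {r : ι → ℝ} {r₀ : ℝ} {v : E}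
    (hr : Tendsto r l (𝓝 r₀)) (hr₀ : ∀ i, 0 ≤ r i) (hv : ‖v‖ ≤ r₀) :
    ∃ w : ι → E, (∀ i, ‖w i‖ ≤ r i) ∧ Tendsto w l (𝓝 v) := by
  rcases eq_or_ne v 0 with rfl | hv₀
  · exact ⟨0, fun i => by simpa using hr₀ i, tendsto_const_nhds⟩
  have hnv : 0 < ‖v‖ := norm_pos_iff.2 hv₀
  set c : ι → ℝ := fun i => min 1 (r i / ‖v‖)
  have hc_le : ∀ i, ‖c i • v‖ ≤ r i := fun i => by
    rw [norm_smul, Real.norm_of_nonneg (le_min zero_le_one (div_nonneg (hr₀ i) hnv.le))]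
    calc c i * ‖v‖ ≤ r i / ‖v‖ * ‖v‖ := by gcongr; exact min_le_right _ _
      _ = r i := div_mul_cancel₀ _ hnv.ne'
  have hc : Tendsto c l (𝓝 1) := by
    have h := tendsto_const_nhds.min (hr.div_const ‖v‖) (f := fun _ : ι => (1 : ℝ))
    rwa [min_eq_left ((one_le_div hnv).2 hv)] at h
  exact ⟨fun i => c i • v, hc_le, by simpa using hc.smul_const v⟩

theorem ellp_sum_fiber_convergent_of_norm_convergent_general
    (X Z : Type*) [NormedAddCommGroup X] [NormedSpace ℝ X]
    [NormedAddCommGroup Z] [NormedSpace ℝ Z]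
    (q : ℝ) (hq : 1 ≤ q)
    (x : ℕ → StrongDual ℝ X) (x₀ : StrongDual ℝ X)
    (hball : ∀ n, ‖x n‖ ≤ 1)
    (hw : Tendsto (fun n => StrongDual.toWeakDual (x n)) atTop (𝓝 (StrongDual.toWeakDual x₀)))
    (hnorm : Tendsto (fun n => ‖x n‖) atTop (𝓝 ‖x₀‖))
    (z₀ : StrongDual ℝ Z) (hfiber : (‖x₀‖ ^ q + ‖z₀‖ ^ q) ^ (1 / q) ≤ 1) :
    ∃ z : ℕ → StrongDual ℝ Z,
      (∀ n, (‖x n‖ ^ q + ‖z n‖ ^ q) ^ (1 / q) ≤ 1) ∧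
      Tendsto (fun n => (StrongDual.toWeakDual (x n), StrongDual.toWeakDual (z n))) atTop
        (𝓝 (StrongDual.toWeakDual x₀, StrongDual.toWeakDual z₀)) := by
  have hq₀ : 0 < q := zero_lt_one.trans_le hq
  have hx₀ : ‖x₀‖ ≤ 1 := le_of_tendsto' hnorm hball
  have hradius : Tendsto (fun n => (1 - ‖x n‖ ^ q) ^ (1 / q)) atTop
      (𝓝 ((1 - ‖x₀‖ ^ q) ^ (1 / q))) :=
    ((hnorm.rpow_const (Or.inr hq₀.le)).const_sub 1).rpow_const (Or.inr (by positivity))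
  have hradius₀ : ∀ n, 0 ≤ (1 - ‖x n‖ ^ q) ^ (1 / q) := fun n =>
    Real.rpow_nonneg (sub_nonneg.2 (Real.rpow_le_one (norm_nonneg _) (hball n) hq₀.le)) _
  obtain ⟨z, hz_le, hz⟩ := exists_norm_le_and_tendsto_of_tendsto hradius hradius₀
    ((rpow_add_rpow_one_div_le_one_iff hq₀ (norm_nonneg _) hx₀ (norm_nonneg _)).1 hfiber)
  exact ⟨z, fun n =>
    (rpow_add_rpow_one_div_le_one_iff hq₀ (norm_nonneg _) (hball n) (norm_nonneg _)).2 (hz_le n),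
    hw.prodMk_nhds ((Dual.toWeakDual_continuous.tendsto z₀).comp hz)⟩

/-- For Banach spaces `X`, `Z` and the ℓᵖ-sum `Y = X ⊕_p Z` with `1 < p ≤ ∞`,
whose dual is `X* ⊕_q Z*` with norm `(‖x*‖^q + ‖z*‖^q)^(1/q)` for the conjugate exponent
`q` (so `1 ≤ q < ∞`), the restriction map `π : B_{Y*} → B_{X*}` has the property: if a
sequence `(xₙ*)` in `B_{X*}` weak* converges to `x₀*` with `‖xₙ*‖ → ‖x₀*‖`, then for every
`(x₀*, z₀*)` in the fiber over `x₀*` there are lifts `(xₙ*, zₙ*)` in the fibers over the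
`xₙ*` converging weak* to `(x₀*, z₀*)`. -/
theorem ellp_sum_fiber_convergent_of_norm_convergent
    (X Z : Type*) [NormedAddCommGroup X] [NormedSpace ℝ X] [CompleteSpace X]
    [NormedAddCommGroup Z] [NormedSpace ℝ Z] [CompleteSpace Z]
    (q : ℝ) (hq : 1 ≤ q)
    (x : ℕ → StrongDual ℝ X) (x₀ : StrongDual ℝ X)
    (hball : ∀ n, ‖x n‖ ≤ 1)
    (hw : Tendsto (fun n => StrongDual.toWeakDual (x n)) atTop (𝓝 (StrongDual.toWeakDual x₀)))
    (hnorm : Tendsto (fun n => ‖x n‖) atTop (𝓝 ‖x₀‖))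
    (z₀ : StrongDual ℝ Z) (hfiber : (‖x₀‖ ^ q + ‖z₀‖ ^ q) ^ (1 / q) ≤ 1) :
    ∃ z : ℕ → StrongDual ℝ Z,
      (∀ n, (‖x n‖ ^ q + ‖z n‖ ^ q) ^ (1 / q) ≤ 1) ∧
      Tendsto (fun n => (StrongDual.toWeakDual (x n), StrongDual.toWeakDual (z n))) atTop
        (𝓝 (StrongDual.toWeakDual x₀, StrongDual.toWeakDual z₀)) :=
  ellp_sum_fiber_convergent_of_norm_convergent_general X Z q hq x x₀ hball hw hnorm z₀ hfiber
end

section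
/- Let X and Z be Banach spaces, 1 < p ≤ ∞ with conjugate exponent q, and Y = X ⊕_p Z with dual norm ‖(x*,z*)‖ = (‖x*‖^q + ‖z*‖^q)^{1/q}. Suppose (xₙ*) is a sequence in B_{X*} weak* converging to x₀* such that the sequence of norms ‖xₙ*‖ does NOT converge to ‖x₀*‖. Then there exists a point (x₀*, z₀*) in the fiber over x₀* in B_{Y*} such that no sequence (xₙ*, zₙ*) ∈ B_{Y*} converges weak* to (x₀*, z₀*). -/
open Filter Topology

/-! Weak* lower semicontinuity of the dual norm gives `‖x₀*‖ ≤ liminf ‖xₙ*‖`, so if `‖xₙ*‖` does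
not tend to `‖x₀*‖`, some `c > ‖x₀*‖` is exceeded by `‖xₙ*‖` infinitely often. Take `z₀*` with
`‖z₀*‖ = (1 - ‖x₀*‖^q)^(1/q)`, putting `(x₀*, z₀*)` on the unit sphere of `Y*`. Along those
indices every admissible `zₙ*` has norm at most `(1 - c^q)^(1/q) < ‖z₀*‖`, and lower
semicontinuity, applied now in `Z*`, rules out `zₙ* → z₀*` weak*. -/

namespace StrongDual

variable {𝕜 E ι : Type*} [NontriviallyNormedField 𝕜] [SeminormedAddCommGroup E] [NormedSpace 𝕜 E]
  {l : Filter ι} {f : ι → StrongDual 𝕜 E} {f₀ : StrongDual 𝕜 E}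

theorem norm_le_of_tendsto_toWeakDual_of_frequently
    (h : Tendsto (fun i => toWeakDual (f i)) l (𝓝 (toWeakDual f₀))) {c : ℝ}
    (hc : ∃ᶠ i in l, ‖f i‖ ≤ c) : ‖f₀‖ ≤ c := by
  simpa using (WeakDual.isClosed_closedBall 0 c).mem_of_frequently_of_tendsto (by simpa using hc) h

theorem exists_frequently_le_norm_of_not_tendsto_norm
    (h : Tendsto (fun i => toWeakDual (f i)) l (𝓝 (toWeakDual f₀)))
    (hn : ¬ Tendsto (fun i => ‖f i‖) l (𝓝 ‖f₀‖)) :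
    ∃ c > ‖f₀‖, ∃ᶠ i in l, c ≤ ‖f i‖ := by
  contrapose! hn
  refine tendsto_order.2 ⟨fun c hc => ?_, fun c hc => ?_⟩
  · by_contra hlow
    simp only [not_eventually, not_lt] at hlow
    exact (norm_le_of_tendsto_toWeakDual_of_frequently h hlow).not_gt hc
  · simpa using hn c hc

end StrongDual

theorem strictAntiOn_one_sub_rpow_rpow_one_div {q : ℝ} (hq : 0 < q) :
    StrictAntiOn (fun a : ℝ => (1 - a ^ q) ^ (1 / q)) (Set.Icc 0 1) := by
  rintro a ⟨ha, -⟩ b ⟨hb, hb1⟩ hab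
  have hbq : b ^ q ≤ 1 := Real.rpow_le_one hb hb1 hq.le
  have habq : a ^ q < b ^ q := Real.rpow_lt_rpow ha hab hq
  exact Real.rpow_lt_rpow (by linarith) (by linarith) (by positivity)

theorem rpow_add_rpow_rpow_one_div_le_one_iff {q a b : ℝ} (hq : 0 < q) (ha : 0 ≤ a) (ha1 : a ≤ 1)
    (hb : 0 ≤ b) :
    (a ^ q + b ^ q) ^ (1 / q) ≤ 1 ↔ b ≤ (1 - a ^ q) ^ (1 / q) := by
  have haq : a ^ q ≤ 1 := Real.rpow_le_one ha ha1 hq.le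
  rw [one_div, Real.rpow_inv_le_iff_of_pos (by positivity) zero_le_one hq,
    Real.le_rpow_inv_iff_of_pos hb (by linarith) hq, Real.one_rpow]
  exact le_sub_iff_add_le'.symm

theorem ellp_sum_not_fiber_convergent_of_norms_not_convergent_general
    (X Z : Type*) [NormedAddCommGroup X] [NormedSpace ℝ X]
    [NormedAddCommGroup Z] [NormedSpace ℝ Z] [Nontrivial Z]
    (q : ℝ) (hq : 1 ≤ q)
    (x : ℕ → StrongDual ℝ X) (x₀ : StrongDual ℝ X)
    (hball : ∀ n, ‖x n‖ ≤ 1)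
    (hw : Tendsto (fun n => StrongDual.toWeakDual (x n)) atTop (𝓝 (StrongDual.toWeakDual x₀)))
    (hnot : ¬ Tendsto (fun n => ‖x n‖) atTop (𝓝 ‖x₀‖)) :
    ∃ z₀ : StrongDual ℝ Z, (‖x₀‖ ^ q + ‖z₀‖ ^ q) ^ (1 / q) ≤ 1 ∧
      ¬ ∃ z : ℕ → StrongDual ℝ Z,
          (∀ n, (‖x n‖ ^ q + ‖z n‖ ^ q) ^ (1 / q) ≤ 1) ∧
          Tendsto (fun n => (StrongDual.toWeakDual (x n), StrongDual.toWeakDual (z n))) atTop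
            (𝓝 (StrongDual.toWeakDual x₀, StrongDual.toWeakDual z₀)) := by
  have hq₀ : 0 < q := by linarith
  have hx₀ : ‖x₀‖ ∈ Set.Icc 0 1 := ⟨norm_nonneg _,
    StrongDual.norm_le_of_tendsto_toWeakDual_of_frequently hw (Frequently.of_forall hball)⟩
  obtain ⟨c, hc, hfreq⟩ := StrongDual.exists_frequently_le_norm_of_not_tendsto_norm hw hnot
  have hcI : c ∈ Set.Icc 0 1 :=
    let ⟨n, hn⟩ := hfreq.exists; ⟨hx₀.1.trans hc.le, hn.trans (hball n)⟩
  have hf := strictAntiOn_one_sub_rpow_rpow_one_div hq₀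
  obtain ⟨z₀, hz₀⟩ := exists_norm_eq (StrongDual ℝ Z)
    (Real.rpow_nonneg (sub_nonneg.2 (Real.rpow_le_one hx₀.1 hx₀.2 hq₀.le)) (1 / q))
  refine ⟨z₀, (rpow_add_rpow_rpow_one_div_le_one_iff hq₀ hx₀.1 hx₀.2 (norm_nonneg _)).2
    hz₀.le, ?_⟩
  rintro ⟨z, hz, hxzw⟩
  have hzc : ∃ᶠ n in atTop, ‖z n‖ ≤ (1 - c ^ q) ^ (1 / q) := hfreq.mono fun n hn =>
    ((rpow_add_rpow_rpow_one_div_le_one_iff hq₀ (norm_nonneg _) (hball n) (norm_nonneg _)).1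
      (hz n)).trans (hf.antitoneOn hcI ⟨norm_nonneg _, hball n⟩ hn)
  have hz₀c : ‖z₀‖ ≤ (1 - c ^ q) ^ (1 / q) :=
    StrongDual.norm_le_of_tendsto_toWeakDual_of_frequently
      ((continuous_snd.tendsto _).comp hxzw) hzc
  exact (hz₀ ▸ hz₀c).not_gt (hf hx₀ hcI hc)

/-- For Banach spaces `X`, `Z` (with `Z` nontrivial, so that `Z*` contains
vectors of any norm) and the ℓᵖ-sum `Y = X ⊕_p Z`, `1 < p ≤ ∞`, with dual norm
`(‖x*‖^q + ‖z*‖^q)^(1/q)` for the conjugate exponent `q` (so `1 ≤ q < ∞`): if `(xₙ*)` in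
`B_{X*}` weak* converges to `x₀*` but `‖xₙ*‖` does NOT converge to `‖x₀*‖`, then there
is a point `(x₀*, z₀*)` of the fiber over `x₀*` in `B_{Y*}` to which no sequence
`(xₙ*, zₙ*) ∈ B_{Y*}` lying over the `xₙ*` can weak* converge. -/
theorem ellp_sum_not_fiber_convergent_of_norms_not_convergent
    (X Z : Type*) [NormedAddCommGroup X] [NormedSpace ℝ X] [CompleteSpace X]
    [NormedAddCommGroup Z] [NormedSpace ℝ Z] [CompleteSpace Z] [Nontrivial Z]
    (q : ℝ) (hq : 1 ≤ q)
    (x : ℕ → StrongDual ℝ X) (x₀ : StrongDual ℝ X)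
    (hball : ∀ n, ‖x n‖ ≤ 1)
    (hw : Tendsto (fun n => StrongDual.toWeakDual (x n)) atTop (𝓝 (StrongDual.toWeakDual x₀)))
    (hnot : ¬ Tendsto (fun n => ‖x n‖) atTop (𝓝 ‖x₀‖)) :
    ∃ z₀ : StrongDual ℝ Z, (‖x₀‖ ^ q + ‖z₀‖ ^ q) ^ (1 / q) ≤ 1 ∧
      ¬ ∃ z : ℕ → StrongDual ℝ Z,
          (∀ n, (‖x n‖ ^ q + ‖z n‖ ^ q) ^ (1 / q) ≤ 1) ∧
          Tendsto (fun n => (StrongDual.toWeakDual (x n), StrongDual.toWeakDual (z n))) atTop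
            (𝓝 (StrongDual.toWeakDual x₀, StrongDual.toWeakDual z₀)) :=
  ellp_sum_not_fiber_convergent_of_norms_not_convergent_general X Z q hq x x₀ hball hw hnot
end

section
/- Let {πᵢ : Xᵢ → Yᵢ}ᵢ∈I be a family of continuous surjections between compact Hausdorff spaces and π = ∏πᵢ : ∏Xᵢ → ∏Yᵢ the product map. A convergent sequence (yₙ) in ∏Yᵢ with limit y is π-fiber convergent if and only if for each i ∈ I the coordinate sequence (yₙ(i)) is πᵢ-fiber convergent to y(i). -/
open Filter Topology

/-- `π`-fiber convergence: a sequence `(yₙ)` converging to `y` in `Y` is `π`-fiber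
convergent (for `π : X → Y`) if every point of the fiber `π⁻¹(y)` is the limit of a
sequence of points of the fibers `π⁻¹(yₙ)`. -/
def IsPiFiberConvergent {X Y : Type*} [TopologicalSpace X] [TopologicalSpace Y]
    (π : X → Y) (y : ℕ → Y) (y₀ : Y) : Prop :=
  ∀ x₀ : X, π x₀ = y₀ →
    ∃ x : ℕ → X, (∀ n, π (x n) = y n) ∧ Tendsto x atTop (𝓝 x₀)

namespace IsPiFiberConvergent

variable {I : Type*} {X Y : I → Type*} [∀ i, TopologicalSpace (X i)]
  [∀ i, TopologicalSpace (Y i)] {π : ∀ i, X i → Y i} {y : ℕ → ∀ i, Y i} {y₀ : ∀ i, Y i}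

theorem pi (h : ∀ i, IsPiFiberConvergent (π i) (fun n => y n i) (y₀ i)) :
    IsPiFiberConvergent (fun x : ∀ i, X i => fun i => π i (x i)) y y₀ := by
  intro x₀ hx₀
  choose x hx hxt using fun i => h i (x₀ i) (congrFun hx₀ i)
  exact ⟨fun n i => x i n, fun n => funext fun i => hx i n, tendsto_pi_nhds.2 hxt⟩

/-- A point of `π i ⁻¹(y₀ i)` is completed to a point of the product fiber by points chosen in the
other fibers. -/
theorem eval [DecidableEq I]
    (h : IsPiFiberConvergent (fun x : ∀ i, X i => fun i => π i (x i)) y y₀)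
    (hy₀ : ∀ j, y₀ j ∈ Set.range (π j)) (i : I) :
    IsPiFiberConvergent (π i) (fun n => y n i) (y₀ i) := by
  intro x₀ hx₀
  choose g hg using hy₀
  have hfiber : (fun j => π j (Function.update g i x₀ j)) = y₀ := by
    simp only [Function.apply_update (f := π), hg, hx₀, Function.update_eq_self]
  obtain ⟨x, hx, hxt⟩ := h _ hfiber
  refine ⟨fun n => x n i, fun n => congrFun (hx n) i, ?_⟩
  simpa only [Function.update_self] using tendsto_pi_nhds.1 hxt i

end IsPiFiberConvergent

theorem piFiberConvergent_pi_iff_general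
    {I : Type*} (X Y : I → Type*)
    [∀ i, TopologicalSpace (X i)]
    [∀ i, TopologicalSpace (Y i)]
    (π : ∀ i, X i → Y i) (hs : ∀ i, Function.Surjective (π i))
    (y : ℕ → ∀ i, Y i) (y₀ : ∀ i, Y i) :
    IsPiFiberConvergent (fun x : ∀ i, X i => fun i => π i (x i)) y y₀ ↔
      ∀ i, IsPiFiberConvergent (π i) (fun n => y n i) (y₀ i) := by
  classical
  exact ⟨fun h => h.eval fun j => hs j (y₀ j), IsPiFiberConvergent.pi⟩

/-- for a family `πᵢ : Xᵢ → Yᵢ` of continuous surjections between compact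
Hausdorff spaces and the product map `π = ∏ πᵢ`, a convergent sequence `(yₙ) → y` in
`∏ Yᵢ` is `π`-fiber convergent iff each coordinate sequence `(yₙ(i)) → y(i)` is
`πᵢ`-fiber convergent. -/
theorem piFiberConvergent_pi_iff
    {I : Type*} (X Y : I → Type*)
    [∀ i, TopologicalSpace (X i)] [∀ i, CompactSpace (X i)] [∀ i, T2Space (X i)]
    [∀ i, TopologicalSpace (Y i)] [∀ i, CompactSpace (Y i)] [∀ i, T2Space (Y i)]
    (π : ∀ i, X i → Y i) (hc : ∀ i, Continuous (π i)) (hs : ∀ i, Function.Surjective (π i))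
    (y : ℕ → ∀ i, Y i) (y₀ : ∀ i, Y i) (hconv : Tendsto y atTop (𝓝 y₀)) :
    IsPiFiberConvergent (fun x : ∀ i, X i => fun i => π i (x i)) y y₀ ↔
      ∀ i, IsPiFiberConvergent (π i) (fun n => y n i) (y₀ i) :=
  piFiberConvergent_pi_iff_general X Y π hs y y₀
end
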